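/- Let R_aa, R_uu be symmetric PSD-compatible blocks with [[R_aa, R_au],[R_au^T, R_uu]] positive semi-definite, and D symmetric positive definite with 3D - R_aa ⪰ 0. Then the symmetric part of R_1 = [[R_aa + D, R_au, D],[R_au^T, R_uu, 0],[R_aa, R_au, D]], namely (R_1 + R_1^T)/2 = [[R_aa + D, R_au, (R_aa + D)/2],[R_au^T, R_uu, R_au^T/2],[(R_aa + D)/2, R_au/2, D]], is positive semi-definite. -/

import Mathlib

/-!
Writing `x = (a, u, b)` and `c = a + b / 2`, the quadratic form of the symmetric part splits as
`xᵀ M x = (c, u)ᵀ R (c, u) + cᵀ D c + ¼ bᵀ (3D - R_aa) b`,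
a sum of three nonnegative terms.
-/

open Matrix

variable {m n : Type*}

theorem Matrix.IsSymm.dotProduct_mulVec_comm [Fintype m] {A : Matrix m m ℝ} (hA : A.IsSymm)
    (v w : m → ℝ) :
    v ⬝ᵥ A *ᵥ w = w ⬝ᵥ A *ᵥ v := by
  rw [← dotProduct_transpose_mulVec, hA.eq]

section SymmPart

variable (Raa D : Matrix m m ℝ) (Ruu : Matrix n n ℝ) (Rau : Matrix m n ℝ)

/-- The symmetric part `(R₁ + R₁ᵀ) / 2` of
`R₁ = [[R_aa + D, R_au, D], [R_auᵀ, R_uu, 0], [R_aa, R_au, D]]`. -/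
noncomputable abbrev symmPartR₁ : Matrix (m ⊕ n ⊕ m) (m ⊕ n ⊕ m) ℝ :=
  fromBlocks (Raa + D) (fromCols Rau (((1 : ℝ) / 2) • (Raa + D)))
    (fromRows Rauᵀ (((1 : ℝ) / 2) • (Raa + D)))
    (fromBlocks Ruu (((1 : ℝ) / 2) • Rauᵀ) (((1 : ℝ) / 2) • Rau) D)

variable {Raa D Ruu}

theorem isHermitian_symmPartR₁ (hRaa : Raa.IsHermitian) (hRuu : Ruu.IsHermitian)
    (hD : D.IsHermitian) : (symmPartR₁ Raa D Ruu Rau).IsHermitian := by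
  have hsum : (Raa + D).IsHermitian := hRaa.add hD
  refine hsum.fromBlocks ?_ (hRuu.fromBlocks ?_ hD)
  · rw [conjTranspose_fromCols_eq_fromRows_conjTranspose, conjTranspose_smul, hsum.eq]
    simp
  · simp

theorem symmPartR₁_quadForm [Fintype m] [Fintype n] (hRaa : Raa.IsSymm) (hD : D.IsSymm)
    (a b : m → ℝ) (u : n → ℝ) :
    let c := a + (1 / 2 : ℝ) • b
    Sum.elim a (Sum.elim u b) ⬝ᵥ symmPartR₁ Raa D Ruu Rau *ᵥ Sum.elim a (Sum.elim u b) =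
      Sum.elim c u ⬝ᵥ fromBlocks Raa Rau Rauᵀ Ruu *ᵥ Sum.elim c u + c ⬝ᵥ D *ᵥ c +
        (1 / 4 : ℝ) * (b ⬝ᵥ ((3 : ℝ) • D - Raa) *ᵥ b) := by
  simp only [fromBlocks_mulVec, sumElim_dotProduct_sumElim, fromCols_mulVec_sumElim,
    fromRows_mulVec, dotProduct_add, add_dotProduct, mulVec_add, mulVec_smul, add_mulVec,
    smul_mulVec, dotProduct_smul, smul_dotProduct, sub_mulVec, dotProduct_sub, smul_eq_mul,
    Sum.elim_comp_inl, Sum.elim_comp_inr, dotProduct_transpose_mulVec,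
    hRaa.dotProduct_mulVec_comm b a, hD.dotProduct_mulVec_comm b a]
  ring

theorem posSemidef_symmPartR₁ [Fintype m] [Fintype n] (hD : D.PosSemidef)
    (hR : (fromBlocks Raa Rau Rauᵀ Ruu).PosSemidef)
    (hbound : ((3 : ℝ) • D - Raa).PosSemidef) : (symmPartR₁ Raa D Ruu Rau).PosSemidef := by
  obtain ⟨hRaa, -, -, hRuu⟩ := isHermitian_fromBlocks_iff.mp hR.isHermitian
  refine posSemidef_iff_dotProduct_mulVec.mpr
    ⟨isHermitian_symmPartR₁ Rau hRaa hRuu hD.isHermitian, fun x => ?_⟩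
  have hx : x = Sum.elim (x ∘ Sum.inl)
      (Sum.elim (x ∘ Sum.inr ∘ Sum.inl) (x ∘ Sum.inr ∘ Sum.inr)) := by
    ext (i | i | i) <;> rfl
  rw [star_trivial, hx, symmPartR₁_quadForm Rau (isHermitian_iff_isSymm.mp hRaa)
    (isHermitian_iff_isSymm.mp hD.isHermitian)]
  exact add_nonneg (add_nonneg (hR.dotProduct_mulVec_nonneg _)
    (hD.dotProduct_mulVec_nonneg _))
    (mul_nonneg (by norm_num) (hbound.dotProduct_mulVec_nonneg _))

end SymmPart

theorem stmt_2 {m s : ℕ}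
    (Raa D : Matrix (Fin m) (Fin m) ℝ) (Ruu : Matrix (Fin s) (Fin s) ℝ)
    (Rau : Matrix (Fin m) (Fin s) ℝ)
    (hD : D.PosDef)
    (hR : (Matrix.fromBlocks Raa Rau Rauᵀ Ruu).PosSemidef)
    (hbound : ((3 : ℝ) • D - Raa).PosSemidef) :
    (Matrix.fromBlocks (Raa + D) (Matrix.fromCols Rau (((1 : ℝ) / 2) • (Raa + D)))
        (Matrix.fromRows Rauᵀ (((1 : ℝ) / 2) • (Raa + D)))
        (Matrix.fromBlocks Ruu (((1 : ℝ) / 2) • Rauᵀ) (((1 : ℝ) / 2) • Rau) D)).PosSemidef :=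
  posSemidef_symmPartR₁ Rau hD.posSemidef hR hbound
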